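/- Let E = Aff(Q,A,g,f,θ) be a central extension of a left quasigroup Q by an abelian group A. Then every n-ary term operation t of E has the form t((x_1,a_1),…,(x_n,a_n)) = (s(x_1,…,x_n), G_1(a_1) + ⋯ + G_n(a_n) + Θ(x_1,…,x_n)), where s is an n-ary term operation of Q, G_1,…,G_n are endomorphisms of A, and Θ : Q^n → A is some map. -/

import Mathlib

namespace PaperLQ

/-- A left quasigroup `(Q, ⬝, \)`: `x ⬝ (x \ y) = y = x \ (x ⬝ y)`. -/
structure LeftQuasigroup (Q : Type*) where
  mul : Q → Q → Q
  ldiv : Q → Q → Q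
  mul_ldiv : ∀ x y, mul x (ldiv x y) = y
  ldiv_mul : ∀ x y, ldiv x (mul x y) = y

namespace LeftQuasigroup

variable {Q : Type*}

/-- The left translation `L_x : y ↦ x ⬝ y`, as a permutation of `Q`. -/
def L (S : LeftQuasigroup Q) (x : Q) : Equiv.Perm Q where
  toFun := S.mul x
  invFun := S.ldiv x
  left_inv := S.ldiv_mul x
  right_inv := S.mul_ldiv x

/-- The left multiplication group `LMlt(Q) = ⟨L_x : x ∈ Q⟩`. -/
def LMlt (S : LeftQuasigroup Q) : Subgroup (Equiv.Perm Q) :=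
  Subgroup.closure (Set.range S.L)

/-- The displacement group `Dis(Q) = ⟨L_x L_y⁻¹ : x, y ∈ Q⟩`. -/
def Dis (S : LeftQuasigroup Q) : Subgroup (Equiv.Perm Q) :=
  Subgroup.closure {g : Equiv.Perm Q | ∃ x y : Q, g = S.L x * (S.L y)⁻¹}

/-- The orbit equivalence `O_N` of a subgroup `N`: `x O_N y` iff `x = h y` for some `h ∈ N`. -/
def orbRel (N : Subgroup (Equiv.Perm Q)) : Setoid Q where
  r x y := ∃ h ∈ N, x = h y
  iseqv := by
    constructor
    · exact fun x => ⟨1, N.one_mem, rfl⟩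
    · rintro x y ⟨h, hh, rfl⟩
      exact ⟨h⁻¹, N.inv_mem hh, (Equiv.symm_apply_apply h y).symm⟩
    · rintro x y z ⟨h, hh, rfl⟩ ⟨k, hk, rfl⟩
      exact ⟨h * k, N.mul_mem hh hk, (Equiv.Perm.mul_apply h k z).symm⟩

/-- The equivalence `c_N`: `x c_N y` iff `L_x L_y⁻¹ ∈ N`. -/
def cRel (S : LeftQuasigroup Q) (N : Subgroup (Equiv.Perm Q)) : Setoid Q where
  r x y := S.L x * (S.L y)⁻¹ ∈ N
  iseqv := by
    constructor
    · intro x; simpa using N.one_mem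
    · intro x y h; simpa [mul_inv_rev] using N.inv_mem h
    · intro x y z h h'; simpa [mul_assoc] using N.mul_mem h h'

/-- The Cayley kernel `λ_Q`: `x λ_Q y` iff `L_x = L_y`. -/
def cayley (S : LeftQuasigroup Q) : Setoid Q where
  r x y := S.L x = S.L y
  iseqv := ⟨fun _ => rfl, Eq.symm, Eq.trans⟩

/-- `α` is a congruence of the left quasigroup. -/
def IsCongruence (S : LeftQuasigroup Q) (α : Setoid Q) : Prop :=
  ∀ ⦃x y z t : Q⦄, α.r x z → α.r y t →
    α.r (S.mul x y) (S.mul z t) ∧ α.r (S.ldiv x y) (S.ldiv z t)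

/-- The relative displacement group `Dis_α = ⟨h L_x L_y⁻¹ h⁻¹ : x α y, h ∈ LMlt(Q)⟩`. -/
def disRel (S : LeftQuasigroup Q) (α : Setoid Q) : Subgroup (Equiv.Perm Q) :=
  Subgroup.closure
    {g : Equiv.Perm Q | ∃ x y h, α.r x y ∧ h ∈ S.LMlt ∧ g = h * (S.L x * (S.L y)⁻¹) * h⁻¹}

/-- The subgroup of permutations moving every point inside its `α`-class. -/
def apprSub (α : Setoid Q) : Subgroup (Equiv.Perm Q) where
  carrier := {h : Equiv.Perm Q | ∀ x : Q, α.r (h x) x}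
  one_mem' := fun x => by
    simpa using α.iseqv.refl x
  mul_mem' := fun {a b} ha hb x => by
    rw [Equiv.Perm.mul_apply]
    exact α.iseqv.trans (ha (b x)) (hb x)
  inv_mem' := fun {a} ha x => by
    have h := ha (a⁻¹ x)
    rw [Equiv.Perm.coe_inv, Equiv.apply_symm_apply] at h
    exact α.iseqv.symm h

/-- The group `Dis^α = {h ∈ Dis(Q) : h(x) α x for all x}`. -/
def disCo (S : LeftQuasigroup Q) (α : Setoid Q) : Subgroup (Equiv.Perm Q) :=
  S.Dis ⊓ apprSub α

/-- `N ∈ Norm'(Q)`: a normal subgroup of `LMlt(Q)` with `N ≤ Dis(Q)` and `O_N ≤ c_N`. -/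
def MemNorm' (S : LeftQuasigroup Q) (N : Subgroup (Equiv.Perm Q)) : Prop :=
  N ≤ S.Dis ∧ (∀ h ∈ S.LMlt, ∀ n ∈ N, h * n * h⁻¹ ∈ N) ∧ orbRel N ≤ S.cRel N

/-- The quotient left quasigroup `Q/α` for a congruence `α`. -/
def quot (S : LeftQuasigroup Q) (α : Setoid Q) (hα : S.IsCongruence α) :
    LeftQuasigroup (Quotient α) where
  mul := Quotient.lift₂ (fun x y => Quotient.mk α (S.mul x y))
    (fun _ _ _ _ h h' => Quotient.sound (hα h h').1)
  ldiv := Quotient.lift₂ (fun x y => Quotient.mk α (S.ldiv x y))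
    (fun _ _ _ _ h h' => Quotient.sound (hα h h').2)
  mul_ldiv := fun a b => Quotient.inductionOn₂ a b fun x y => by
    show Quotient.mk α (S.mul x (S.ldiv x y)) = Quotient.mk α y
    rw [S.mul_ldiv]
  ldiv_mul := fun a b => Quotient.inductionOn₂ a b fun x y => by
    show Quotient.mk α (S.ldiv x (S.mul x y)) = Quotient.mk α y
    rw [S.ldiv_mul]

/-- The image `π_α(N)` of a subgroup `N ≤ LMlt(Q)` in `Sym(Q/α)`: the permutations of
`Q/α` induced by some element of `N`. -/
def pushSub (α : Setoid Q) (N : Subgroup (Equiv.Perm Q)) :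
    Subgroup (Equiv.Perm (Quotient α)) where
  carrier := {g | ∃ h ∈ N, ∀ x : Q, g (Quotient.mk α x) = Quotient.mk α (h x)}
  one_mem' := ⟨1, N.one_mem, fun x => rfl⟩
  mul_mem' := fun {g₁ g₂} h₁ h₂ => by
    obtain ⟨k₁, hk₁, e₁⟩ := h₁
    obtain ⟨k₂, hk₂, e₂⟩ := h₂
    exact ⟨k₁ * k₂, N.mul_mem hk₁ hk₂, fun x => by
      rw [Equiv.Perm.mul_apply, Equiv.Perm.mul_apply, e₂ x, e₁ (k₂ x)]⟩
  inv_mem' := fun {g} h => by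
    obtain ⟨k, hk, e⟩ := h
    refine ⟨k⁻¹, N.inv_mem hk, fun x => ?_⟩
    have h' := e (k⁻¹ x)
    rw [Equiv.Perm.coe_inv, Equiv.apply_symm_apply] at h'
    rw [← h', Equiv.Perm.coe_inv, Equiv.symm_apply_apply]
    rfl

/-- `Q` is faithful if the Cayley kernel is trivial. -/
def Faithful (S : LeftQuasigroup Q) : Prop := S.cayley = ⊥

/-- `Q` is sharp: whenever `α ≤ β` are congruences with `β/α ≤ λ_{Q/α}`, then `α = β`. -/
def Sharp (S : LeftQuasigroup Q) : Prop :=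
  ∀ (α β : Setoid Q) (hα : S.IsCongruence α), S.IsCongruence β → α ≤ β →
    (∀ x y : Q, β.r x y →
      (S.quot α hα).L (Quotient.mk α x) = (S.quot α hα).L (Quotient.mk α y)) →
    α = β

/-- `Q` has congruences determined by orbits: `Dis^* : Con(Q) → Norm'(Q)` and
`O_* : Norm'(Q) → Con(Q)` are mutually inverse isomorphisms. -/
def CDOs (S : LeftQuasigroup Q) : Prop :=
  (∀ α : Setoid Q, S.IsCongruence α → orbRel (S.disCo α) = α) ∧
  (∀ N : Subgroup (Equiv.Perm Q), S.MemNorm' N → S.disCo (orbRel N) = N)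

/-- `Q` has congruences determined by subgroups: `Dis_* : Con(Q) → Norm'(Q)` and
`c_* : Norm'(Q) → Con(Q)` are mutually inverse isomorphisms. -/
def CDSg (S : LeftQuasigroup Q) : Prop :=
  (∀ α : Setoid Q, S.IsCongruence α → S.cRel (S.disRel α) = α) ∧
  (∀ N : Subgroup (Equiv.Perm Q), S.MemNorm' N → S.disRel (S.cRel N) = N)

/-- `Q` is connected: `LMlt(Q)` acts transitively. -/
def Connected (S : LeftQuasigroup Q) : Prop :=
  ∀ x y : Q, ∃ h ∈ S.LMlt, x = h y

/-- The subalgebra structure on a subset closed under `⬝` and `\`. -/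
def sub (S : LeftQuasigroup Q) (T : Set Q)
    (hm : ∀ ⦃x⦄, x ∈ T → ∀ ⦃y⦄, y ∈ T → S.mul x y ∈ T)
    (hd : ∀ ⦃x⦄, x ∈ T → ∀ ⦃y⦄, y ∈ T → S.ldiv x y ∈ T) : LeftQuasigroup T where
  mul a b := ⟨S.mul a b, hm a.2 b.2⟩
  ldiv a b := ⟨S.ldiv a b, hd a.2 b.2⟩
  mul_ldiv a b := Subtype.ext (S.mul_ldiv a b)
  ldiv_mul a b := Subtype.ext (S.ldiv_mul a b)

/-- `Q` is superconnected: every subalgebra is connected. -/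
def Superconnected (S : LeftQuasigroup Q) : Prop :=
  ∀ (T : Set Q) (hm : ∀ ⦃x⦄, x ∈ T → ∀ ⦃y⦄, y ∈ T → S.mul x y ∈ T)
    (hd : ∀ ⦃x⦄, x ∈ T → ∀ ⦃y⦄, y ∈ T → S.ldiv x y ∈ T),
    (S.sub T hm hd).Connected

/-- `Q` is idempotent: `x ⬝ x = x`. -/
def Idempotent (S : LeftQuasigroup Q) : Prop := ∀ x : Q, S.mul x x = x

/-- `Q` is latin: all right translations are bijective. -/
def Latin (S : LeftQuasigroup Q) : Prop :=
  ∀ x : Q, Function.Bijective fun y => S.mul y x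

/-- `Q` is semiregular: the stabilizer of any point in `Dis(Q)` is trivial. -/
def Semiregular (S : LeftQuasigroup Q) : Prop :=
  ∀ x : Q, ∀ h ∈ S.Dis, h x = x → h = 1

/-- The term operations of a left quasigroup: the clone generated by `⬝` and `\`. -/
inductive IsTermOp (S : LeftQuasigroup Q) : {n : ℕ} → ((Fin n → Q) → Q) → Prop
  | proj {n : ℕ} (i : Fin n) : IsTermOp S fun v => v i
  | mul {n : ℕ} {t s : (Fin n → Q) → Q} :
      IsTermOp S t → IsTermOp S s → IsTermOp S fun v => S.mul (t v) (s v)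
  | ldiv {n : ℕ} {t s : (Fin n → Q) → Q} :
      IsTermOp S t → IsTermOp S s → IsTermOp S fun v => S.ldiv (t v) (s v)

/-- The centrality relation `C(α, β; δ)` of commutator theory. -/
def Centralizes (S : LeftQuasigroup Q) (α β δ : Setoid Q) : Prop :=
  ∀ (n : ℕ) (t : (Fin (n + 1) → Q) → Q), S.IsTermOp t →
    ∀ x y : Q, α.r x y → ∀ z u : Fin n → Q, (∀ i, β.r (z i) (u i)) →
      δ.r (t (Fin.cons x z)) (t (Fin.cons x u)) →
      δ.r (t (Fin.cons y z)) (t (Fin.cons y u))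

/-- The center `ζ_Q`: the largest central congruence. -/
def center (S : LeftQuasigroup Q) : Setoid Q :=
  sSup {β : Setoid Q | S.IsCongruence β ∧ S.Centralizes β ⊤ ⊥}

/-- The upper central series: `ζ_0 = 0_Q` and `ζ_{n+1}/ζ_n = ζ_{Q/ζ_n}`. -/
def zeta (S : LeftQuasigroup Q) : ℕ → Setoid Q
  | 0 => ⊥
  | n + 1 =>
      sSup {β : Setoid Q | S.IsCongruence β ∧ S.zeta n ≤ β ∧ S.Centralizes β ⊤ (S.zeta n)}

/-- `Q` is nilpotent: the upper central series reaches `1_Q`. -/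
def Nilpotent (S : LeftQuasigroup Q) : Prop := ∃ n : ℕ, S.zeta n = ⊤

/-- The variety generated by `Q` has a Malt'sev term. -/
def Maltsev (S : LeftQuasigroup Q) : Prop :=
  ∃ m : Q → Q → Q → Q,
    S.IsTermOp (n := 3) (fun v => m (v 0) (v 1) (v 2)) ∧
    ∀ x y : Q, m x y y = x ∧ m y y x = x

/-- The central extension `E = Aff(Q, A, g, f, θ)` of `Q` by an abelian group `A`. -/
def affExt (S : LeftQuasigroup Q) (A : Type*) [AddCommGroup A]
    (g : A →+ A) (f : AddAut A) (θ : Q → Q → A) : LeftQuasigroup (Q × A) where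
  mul p q := (S.mul p.1 q.1, g p.2 + f q.2 + θ p.1 q.1)
  ldiv p q := (S.ldiv p.1 q.1, f.symm (q.2 - g p.2 - θ p.1 (S.ldiv p.1 q.1)))
  mul_ldiv := by
    rintro ⟨x, a⟩ ⟨y, b⟩
    dsimp only
    rw [S.mul_ldiv, AddEquiv.apply_symm_apply]
    refine Prod.ext rfl ?_
    dsimp only
    abel
  ldiv_mul := by
    rintro ⟨x, a⟩ ⟨y, b⟩
    dsimp only
    rw [S.ldiv_mul]
    refine Prod.ext rfl ?_
    dsimp only
    have h : g a + f b + θ x y - g a - θ x y = f b := by abel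
    rw [h, AddEquiv.symm_apply_apply]

/-- The affine left quasigroup `Aff(A, g, f, c)`: `a ⬝ b = g(a) + f(b) + c`. -/
def affine {A : Type*} [AddCommGroup A] (g : A →+ A) (f : AddAut A) (c : A) :
    LeftQuasigroup A where
  mul a b := g a + f b + c
  ldiv a b := f.symm (b - g a - c)
  mul_ldiv := by
    intro a b
    rw [AddEquiv.apply_symm_apply]
    abel
  ldiv_mul := by
    intro a b
    have h : g a + f b + c - g a - c = f b := by abel
    rw [h, AddEquiv.symm_apply_apply]

/-- The relation `α_N` on `Q × A`: `(x,a) α_N (y,b)` iff `x = y` and `a - b ∈ N`. -/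
def prodCongr (Q : Type*) {A : Type*} [AddCommGroup A] (N : AddSubgroup A) :
    Setoid (Q × A) where
  r p q := p.1 = q.1 ∧ p.2 - q.2 ∈ N
  iseqv := by
    constructor
    · exact fun p => ⟨rfl, by simpa using N.zero_mem⟩
    · rintro p q ⟨h1, h2⟩
      exact ⟨h1.symm, by simpa using N.neg_mem h2⟩
    · rintro p q r ⟨h1, h2⟩ ⟨h1', h2'⟩
      exact ⟨h1.trans h1', by simpa [sub_add_sub_cancel] using N.add_mem h2 h2'⟩

/-- One additive `φ` on `Aⁿ` in place of the theorem's `G₁, …, Gₙ` (recovered as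
`Gᵢ = φ ∘ Pi.single i`), since such maps compose without reindexing sums. -/
def IsAffineOver {A : Type*} [AddCommGroup A] {n : ℕ} (s : (Fin n → Q) → Q)
    (t : (Fin n → Q × A) → Q × A) : Prop :=
  ∃ (φ : (Fin n → A) →+ A) (Θ : (Fin n → Q) → A),
    ∀ v, t v = (s (Prod.fst ∘ v), φ (Prod.snd ∘ v) + Θ (Prod.fst ∘ v))

section IsAffineOver

variable {A : Type*} [AddCommGroup A] {n : ℕ}

theorem isAffineOver_proj (i : Fin n) :
    IsAffineOver (fun x : Fin n → Q => x i) (fun v : Fin n → Q × A => v i) :=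
  ⟨Pi.evalAddMonoidHom (fun _ => A) i, 0, fun v => by simp⟩

variable {S : LeftQuasigroup Q} {g : A →+ A} {f : AddAut A} {θ : Q → Q → A}
  {s₁ s₂ : (Fin n → Q) → Q} {t₁ t₂ : (Fin n → Q × A) → Q × A}

theorem IsAffineOver.affExt_mul (h₁ : IsAffineOver s₁ t₁) (h₂ : IsAffineOver s₂ t₂) :
    IsAffineOver (fun x => S.mul (s₁ x) (s₂ x))
      (fun v => (S.affExt A g f θ).mul (t₁ v) (t₂ v)) := by
  obtain ⟨φ₁, Θ₁, e₁⟩ := h₁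
  obtain ⟨φ₂, Θ₂, e₂⟩ := h₂
  refine ⟨g.comp φ₁ + f.toAddMonoidHom.comp φ₂,
    fun x => g (Θ₁ x) + f (Θ₂ x) + θ (s₁ x) (s₂ x), fun v => ?_⟩
  dsimp only
  rw [e₁ v, e₂ v]
  refine Prod.ext rfl ?_
  simp only [affExt, AddMonoidHom.add_apply, AddMonoidHom.comp_apply,
    AddEquiv.coe_toAddMonoidHom, map_add]
  abel

theorem IsAffineOver.affExt_ldiv (h₁ : IsAffineOver s₁ t₁) (h₂ : IsAffineOver s₂ t₂) :
    IsAffineOver (fun x => S.ldiv (s₁ x) (s₂ x))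
      (fun v => (S.affExt A g f θ).ldiv (t₁ v) (t₂ v)) := by
  obtain ⟨φ₁, Θ₁, e₁⟩ := h₁
  obtain ⟨φ₂, Θ₂, e₂⟩ := h₂
  refine ⟨f.symm.toAddMonoidHom.comp (φ₂ - g.comp φ₁),
    fun x => f.symm (Θ₂ x - g (Θ₁ x) - θ (s₁ x) (S.ldiv (s₁ x) (s₂ x))), fun v => ?_⟩
  dsimp only
  rw [e₁ v, e₂ v]
  refine Prod.ext rfl ?_
  simp only [affExt, AddMonoidHom.comp_apply, AddMonoidHom.sub_apply,
    AddEquiv.coe_toAddMonoidHom]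
  rw [← map_add]
  congr 1
  rw [map_add]
  abel

end IsAffineOver

/-- Every term operation of a central extension `Aff(Q,A,g,f,θ)` has the form
`t((x₁,a₁),…,(xₙ,aₙ)) = (s(x₁,…,xₙ), G₁(a₁) + ⋯ + Gₙ(aₙ) + Θ(x₁,…,xₙ))`. -/
theorem statement_12 {Q : Type*} {A : Type*} [AddCommGroup A] (S : LeftQuasigroup Q)
    (g : A →+ A) (f : AddAut A) (θ : Q → Q → A)
    (n : ℕ) (t : (Fin n → Q × A) → Q × A)
    (ht : (S.affExt A g f θ).IsTermOp t) :
    ∃ (s : (Fin n → Q) → Q) (G : Fin n → A →+ A) (Θ : (Fin n → Q) → A),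
      S.IsTermOp s ∧
      ∀ v : Fin n → Q × A,
        t v = (s fun i => (v i).1, (∑ i, G i ((v i).2)) + Θ fun i => (v i).1) := by
  suffices ∃ s, S.IsTermOp s ∧ IsAffineOver s t by
    obtain ⟨s, hs, φ, Θ, e⟩ := this
    refine ⟨s, fun i => φ.comp (AddMonoidHom.single (fun _ => A) i), Θ, hs, fun v => ?_⟩
    rw [e v, ← Finset.univ_sum_single (Prod.snd ∘ v), map_sum]
    rfl
  induction ht with
  | proj i => exact ⟨_, .proj i, isAffineOver_proj i⟩
  | mul _ _ ih₁ ih₂ =>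
    obtain ⟨s₁, hs₁, h₁⟩ := ih₁
    obtain ⟨s₂, hs₂, h₂⟩ := ih₂
    exact ⟨_, .mul hs₁ hs₂, h₁.affExt_mul h₂⟩
  | ldiv _ _ ih₁ ih₂ =>
    obtain ⟨s₁, hs₁, h₁⟩ := ih₁
    obtain ⟨s₂, hs₂, h₂⟩ := ih₂
    exact ⟨_, .ldiv hs₁ hs₂, h₁.affExt_ldiv h₂⟩

end LeftQuasigroup

end PaperLQ
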